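/- Let x = X_1 be the generating operator of the complex group algebra of the free group F_N on N ≥ 1 generators. If k < n, then x^k · X_n = Σ_{i=0}^{k} binom(k,i)·(2N−1)^i · X_{n+k−2i}. -/

import Mathlib

/-- `Xop N n` is the operator `X_n`: the sum, in the complex group algebra
`ℂ[F_N] = MonoidAlgebra ℂ (FreeGroup (Fin N))`, of the basis elements of all
words `w` whose reduced word has length `n`. Note `Xop N 0 = 1`. -/
noncomputable def Xop (N n : ℕ) : MonoidAlgebra ℂ (FreeGroup (Fin N)) :=
  ∑ᶠ w ∈ {w : FreeGroup (Fin N) | (FreeGroup.toWord w).length = n},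
    MonoidAlgebra.of ℂ (FreeGroup (Fin N)) w

/-- The canonical trace `τ` on `ℂ[F_N]`: the coefficient at the identity. -/
noncomputable def tr {N : ℕ} (a : MonoidAlgebra ℂ (FreeGroup (Fin N))) : ℂ := a.coeff 1

/-!
For a letter `a` and a reduced word `v = b t`, the reduced form of `a⁻¹ v` has length `|t|` if
`a = b` and `|t| + 2` otherwise. Counting letters at each `v` gives
`X_1 X_m = X_{m+1} + (2N-1) X_{m-1}` for `m ≥ 2` (at `m = 1` the empty word contributes
`2N X_0` instead). Hence `x` acts on the `X_j`, `j ≥ 2`, as `r + (2N-1) r⁻¹` acts on the powers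
`r^j`; since `k < n`, expanding `x^k X_n` never leaves that range, and the coefficients are those
of `(r + (2N-1) r⁻¹)^k`.
-/

open Finset

theorem pow_mul_eq_sum_choose_nsmul_of_recurrence {A : Type*} [Semiring A] {x : A} {X : ℕ → A}
    {q : ℕ} (hX : ∀ m, 2 ≤ m → x * X m = X (m + 1) + q • X (m - 1)) {k n : ℕ} (hkn : k < n) :
    x ^ k * X n = ∑ i ∈ range (k + 1), (k.choose i * q ^ i : ℕ) • X (n + k - 2 * i) := by
  -- `i` steps down and `j` steps up, so that Pascal's rule is `Finset.sum_choose_succ_nsmul`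
  set f : ℕ → ℕ → A := fun i j => q ^ i • X (n + j - i)
  suffices h : x ^ k * X n = ∑ i ∈ range (k + 1), k.choose i • f i (k - i) by
    refine h.trans (sum_congr rfl fun i hi => ?_)
    rw [mul_smul, show n + k - 2 * i = n + (k - i) - i by grind]
  induction k with
  | zero => simp [f]
  | succ k ih =>
    have hstep : ∀ i ∈ range (k + 1), x * (k.choose i • f i (k - i)) =
        k.choose i • f i (k + 1 - i) + k.choose i • f (i + 1) (k - i) := by
      intro i hi
      have hik : i ≤ k := Nat.lt_succ_iff.mp (mem_range.mp hi)
      rw [mul_smul_comm, mul_smul_comm, hX _ (by omega), smul_add, smul_smul, ← pow_succ,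
        smul_add, show n + (k - i) - i + 1 = n + (k + 1 - i) - i by omega,
        show n + (k - i) - i - 1 = n + (k - i) - (i + 1) by omega]
    rw [pow_succ', mul_assoc, ih (by omega), mul_sum, sum_congr rfl hstep, sum_add_distrib,
      sum_choose_succ_nsmul]

namespace FreeGroup

variable {α : Type*} [DecidableEq α]

theorem toWord_mk_singleton (a : α × Bool) : toWord (mk [a]) = [a] := by
  rw [toWord_mk, reduce_singleton]

theorem mk_singleton_injective : Function.Injective fun a : α × Bool => mk [a] :=
  fun a b h => by simpa [toWord_mk_singleton] using congrArg toWord h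

theorem length_toWord_mk_singleton_inv_mul (a : α × Bool) {v : FreeGroup α}
    {b : α × Bool} {t : List (α × Bool)} (hv : toWord v = b :: t) :
    (toWord ((mk [a])⁻¹ * v)).length = if a = b then t.length else t.length + 2 := by
  have : (mk [a])⁻¹ * v = mk ((a.1, !a.2) :: toWord v) := by
    conv_lhs => rw [← mk_toWord (x := v)]
    rw [inv_mk, mul_mk]
    rfl
  rw [this, toWord_mk, reduce.cons, reduce_toWord, hv]
  by_cases hab : a = b
  · simp [hab]
  · simp [hab, ← Prod.ext_iff]

theorem setOf_length_toWord_eq_one :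
    {w : FreeGroup α | (toWord w).length = 1} = Set.range fun a : α × Bool => mk [a] := by
  ext w
  simp only [Set.mem_ofPred_eq, Set.mem_range, List.length_eq_one_iff]
  constructor
  · rintro ⟨a, ha⟩
    exact ⟨a, by rw [← ha, mk_toWord]⟩
  · rintro ⟨a, rfl⟩
    exact ⟨a, toWord_mk_singleton a⟩

theorem finite_setOf_length_toWord_eq [Finite α] (n : ℕ) :
    {w : FreeGroup α | (toWord w).length = n}.Finite :=
  ((List.finite_length_eq (α × Bool) n).preimage toWord_injective.injOn).subset fun _ hw => hw

end FreeGroup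

open FreeGroup MonoidAlgebra

theorem Xop_eq_sum (N n : ℕ) :
    Xop N n = ∑ w ∈ (finite_setOf_length_toWord_eq n).toFinset, of ℂ (FreeGroup (Fin N)) w :=
  finsum_mem_eq_finite_toFinset_sum _ _

theorem coeff_Xop (N n : ℕ) (v : FreeGroup (Fin N)) :
    (Xop N n).coeff v = if (toWord v).length = n then 1 else 0 := by
  rw [Xop_eq_sum, coeff_sum, Finsupp.finsetSum_apply]
  simp [Finsupp.single_apply]

theorem Xop_one (N : ℕ) : Xop N 1 = ∑ a : Fin N × Bool, of ℂ (FreeGroup (Fin N)) (mk [a]) := by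
  rw [Xop, setOf_length_toWord_eq_one, finsum_mem_range mk_singleton_injective,
    finsum_eq_sum_of_fintype]

theorem Xop_one_mul_Xop (N : ℕ) {m : ℕ} (hm : 2 ≤ m) :
    Xop N 1 * Xop N m = Xop N (m + 1) + (2 * N - 1 : ℕ) • Xop N (m - 1) := by
  rw [← Nat.cast_smul_eq_nsmul ℂ]
  ext v
  simp only [Xop_one, sum_mul, coeff_sum, coeff_add, coeff_smul, of_apply, coeff_single_mul_apply,
    one_mul, coeff_Xop, smul_eq_mul, Finsupp.finsetSum_apply, Finsupp.add_apply, Finsupp.smul_apply]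
  rcases hv : toWord v with _ | ⟨b, t⟩
  · have h1 : 1 ≠ m := by omega
    have h0 : 0 ≠ m - 1 := by omega
    simp [toWord_eq_nil_iff.mp hv, invRev, h1, h0]
  · simp only [length_toWord_mk_singleton_inv_mul _ hv,
      apply_ite (fun l => if l = m then (1 : ℂ) else 0)]
    rw [sum_ite, sum_const, sum_const, filter_eq', filter_ne', card_erase_of_mem (mem_univ b)]
    simp only [if_pos (mem_univ b), card_singleton, card_univ, Fintype.card_prod, Fintype.card_fin,
      Fintype.card_bool, List.length_cons, Nat.add_right_cancel_iff, one_smul, nsmul_eq_mul,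
      show t.length + 1 = m - 1 ↔ t.length + 2 = m by omega, mul_comm N 2]

theorem stmt_3_general (N : ℕ) (k n : ℕ) (hkn : k < n) :
    (Xop N 1) ^ k * Xop N n =
      ∑ i ∈ Finset.range (k + 1),
        (k.choose i * (2 * N - 1) ^ i : ℕ) • Xop N (n + k - 2 * i) :=
  pow_mul_eq_sum_choose_nsmul_of_recurrence (X := Xop N) (fun _ hm => Xop_one_mul_Xop N hm) hkn

theorem stmt_3 (N : ℕ) (hN : 1 ≤ N) (k n : ℕ) (hkn : k < n) :
    (Xop N 1) ^ k * Xop N n =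
      ∑ i ∈ Finset.range (k + 1),
        (k.choose i * (2 * N - 1) ^ i : ℕ) • Xop N (n + k - 2 * i) :=
  stmt_3_general N k n hkn
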